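/- arXiv:1803.07214 — 2 statements merged into one kernel-verified Lean document; each statement's English description precedes it below -/
import Mathlib

section
/- Let k be a field, V a nonzero k-vector space, X a subset of End_k(V), and R the nonunital k-subalgebra of End_k(V) generated by X. If X is topologically nilpotent, then R is topologically nilpotent. -/
variable {k : Type*} [Field k]

/-- `seqProd f n = f (n-1) * ⋯ * f 1 * f 0`, the composition `Tₙ ⋯ T₂ T₁` of the first `n`
terms of the sequence `f` (and the identity for `n = 0`). -/
def seqProd {V : Type*} [AddCommGroup V] [Module k V]
    (f : ℕ → Module.End k V) : ℕ → Module.End k V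
  | 0 => 1
  | n + 1 => f n * seqProd f n

/-- A subset `X ⊆ End_k(V)` is topologically nilpotent if for every sequence of elements of
`X` and every finite-dimensional subspace `W` of `V`, some initial composition
`Tₙ ⋯ T₂ T₁` annihilates `W`. -/
def IsTopNilpotentSet {V : Type*} [AddCommGroup V] [Module k V]
    (X : Set (Module.End k V)) : Prop :=
  ∀ f : ℕ → Module.End k V, (∀ n, f n ∈ X) →
    ∀ W : Submodule k V, FiniteDimensional k ↥W →
      ∃ n : ℕ, 0 < n ∧ ∀ w ∈ W, seqProd f n w = 0

/-!
Write each element of the subalgebra as a linear combination of words in `X`. For a single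
sequence of words, concatenating the letters gives a sequence in `X`, so the semigroup generated
by `X` is topologically nilpotent. For linear combinations, `Tₙ ⋯ T₁ w` lies in the span of the
`Sₙ ⋯ S₁ w` with each `Sⱼ` drawn from a finite set `Fⱼ ⊆ X`; by König's lemma all these products
vanish on `W` from one common `N` on.
-/

open Function

lemma Subsemigroup.exists_list_of_mem_closure {M : Type*} [Monoid M] {s : Set M} {x : M}
    (hx : x ∈ Subsemigroup.closure s) : ∃ l : List M, l ≠ [] ∧ (∀ y ∈ l, y ∈ s) ∧ l.prod = x := by
  induction hx using Subsemigroup.closure_induction with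
  | mem x hx => exact ⟨[x], List.cons_ne_nil _ _, by simpa using hx, List.prod_singleton⟩
  | mul x y _ _ hx hy =>
    obtain ⟨l₁, hl₁, hl₁s, rfl⟩ := hx
    obtain ⟨l₂, -, hl₂s, rfl⟩ := hy
    refine ⟨l₁ ++ l₂, by simp [hl₁], fun z hz => ?_, List.prod_append⟩
    exact (List.mem_append.mp hz).elim (hl₁s z) (hl₂s z)

lemma List.flatMap_range_succ {α : Type*} (l : ℕ → List α) (n : ℕ) :
    (List.range (n + 1)).flatMap l = (List.range n).flatMap l ++ l n := by
  simp [List.range_succ, List.flatMap_append]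

lemma List.le_length_flatMap_range {α : Type*} {l : ℕ → List α} (hl : ∀ n, l n ≠ []) (n : ℕ) :
    n ≤ ((List.range n).flatMap l).length := by
  induction n with
  | zero => exact le_rfl
  | succ n ih =>
    rw [List.flatMap_range_succ, List.length_append]
    have := List.length_pos_iff.mpr (hl n)
    omega

lemma List.exists_map_range_eq_flatMap_range {α : Type*} (l : ℕ → List α) (hl : ∀ n, l n ≠ []) :
    ∃ g : ℕ → α, ∀ n,
      (List.range ((List.range n).flatMap l).length).map g = (List.range n).flatMap l := by
  set P : ℕ → List α := fun n => (List.range n).flatMap l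
  have hP : ∀ n, P (n + 1) = P n ++ l n := List.flatMap_range_succ l
  have hlen : ∀ n, n ≤ (P n).length := List.le_length_flatMap_range hl
  have hprefix : ∀ {n m}, n ≤ m → P n <+: P m := by
    intro n m hnm
    induction m, hnm using Nat.le_induction with
    | base => exact List.prefix_refl _
    | succ m _ ih => exact hP m ▸ ih.trans (List.prefix_append _ _)
  refine ⟨fun j => (P (j + 1))[j]'(hlen (j + 1)), fun n => List.ext_getElem (by simp) ?_⟩
  intro j hj _
  simp only [List.getElem_map, List.getElem_range]
  rcases le_total (j + 1) n with h | h
  · exact (hprefix h).getElem _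
  · exact ((hprefix h).getElem _).symm

section SeqProd

variable {V : Type*} [AddCommGroup V] [Module k V]

lemma seqProd_succ (f : ℕ → Module.End k V) (n : ℕ) :
    seqProd f (n + 1) = f n * seqProd f n := rfl

lemma seqProd_congr {f g : ℕ → Module.End k V} {n : ℕ} (h : ∀ j < n, f j = g j) :
    seqProd f n = seqProd g n := by
  induction n with
  | zero => rfl
  | succ n ih => rw [seqProd_succ, seqProd_succ, ih fun j hj => h j (by omega), h n n.lt_succ_self]

lemma seqProd_update_self_succ (f : ℕ → Module.End k V) (n : ℕ) (T : Module.End k V) :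
    seqProd (update f n T) (n + 1) = T * seqProd f n := by
  rw [seqProd_succ, update_self, seqProd_congr fun j hj => update_of_ne hj.ne _ _]

lemma seqProd_apply_eq_zero_of_le {f : ℕ → Module.End k V} {n m : ℕ} (hnm : n ≤ m) {v : V}
    (h : seqProd f n v = 0) : seqProd f m v = 0 := by
  induction m, hnm using Nat.le_induction with
  | base => exact h
  | succ m _ ih => rw [seqProd_succ, Module.End.mul_apply, ih, map_zero]

lemma seqProd_eq_prod_reverse_map_range (f : ℕ → Module.End k V) (n : ℕ) :
    seqProd f n = ((List.range n).map f).reverse.prod := by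
  induction n with
  | zero => rfl
  | succ n ih => simp [seqProd_succ, ih, List.range_succ]

lemma prod_reverse_flatMap_range_eq_seqProd (l : ℕ → List (Module.End k V)) (n : ℕ) :
    ((List.range n).flatMap l).reverse.prod = seqProd (fun i => (l i).reverse.prod) n := by
  induction n with
  | zero => rfl
  | succ n ih =>
    rw [List.flatMap_range_succ, List.reverse_append, List.prod_append, ih, seqProd_succ]

/-- König's lemma, proved by compactness of `∏ j, F j`: the sets of sequences that have killed `W`
by time `n` form an increasing open cover. -/
lemma exists_forall_seqProd_apply_eq_zero_of_finite {F : ℕ → Set (Module.End k V)}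
    (hF : ∀ j, (F j).Finite) (W : Submodule k V)
    (h : ∀ g : ℕ → Module.End k V, (∀ j, g j ∈ F j) → ∃ n, ∀ w ∈ W, seqProd g n w = 0) :
    ∃ N, ∀ g : ℕ → Module.End k V, (∀ j < N, g j ∈ F j) → ∀ w ∈ W, seqProd g N w = 0 := by
  by_cases hne : ∀ j, (F j).Nonempty
  swap
  · push Not at hne
    obtain ⟨j, hj⟩ := hne
    exact ⟨j + 1, fun g hg => by simpa [hj] using hg j j.lt_succ_self⟩
  let _ : ∀ j, TopologicalSpace (F j) := fun _ => ⊥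
  have : ∀ j, DiscreteTopology (F j) := fun _ => ⟨rfl⟩
  have : ∀ j, Finite (F j) := fun j => (hF j).to_subtype
  let U : ℕ → Set (∀ j, F j) := fun n =>
    {g | ∀ w ∈ W, seqProd (fun j => (g j : Module.End k V)) n w = 0}
  have hUo : ∀ n, IsOpen (U n) := by
    refine fun n => isOpen_iff_forall_mem_open.mpr fun g hg =>
      ⟨(Set.Iio n).pi fun j => {g j}, ?_, ?_, ?_⟩
    · intro g' hg' w hw
      rw [seqProd_congr fun j hj => congrArg Subtype.val (hg' j hj)]
      exact hg w hw
    · exact isOpen_set_pi (Set.finite_Iio n) fun _ _ => isOpen_discrete _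
    · exact fun j _ => rfl
  have hUmono : Monotone U := fun n m hnm g hg w hw => seqProd_apply_eq_zero_of_le hnm (hg w hw)
  obtain ⟨N, hN⟩ := isCompact_univ.elim_directed_cover U hUo
    (fun g _ => Set.mem_iUnion.mpr (h _ fun j => (g j).2)) hUmono.directed_le
  refine ⟨N, fun g hg w hw => ?_⟩
  let g' : ∀ j, F j := fun j => if hj : j < N then ⟨g j, hg j hj⟩ else ⟨_, (hne j).some_mem⟩
  have hg'g : ∀ j < N, (g' j : Module.End k V) = g j := fun j hj => by simp [g', hj]
  rw [← seqProd_congr hg'g]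
  exact hN (Set.mem_univ g') w hw

lemma seqProd_apply_mem_span {F : ℕ → Set (Module.End k V)} {f : ℕ → Module.End k V}
    (hf : ∀ n, f n ∈ Submodule.span k (F n)) (v : V) (n : ℕ) :
    seqProd f n v ∈ Submodule.span k {u | ∃ g, (∀ j < n, g j ∈ F j) ∧ seqProd g n v = u} := by
  induction n with
  | zero => exact Submodule.subset_span ⟨f, fun j hj => absurd hj j.not_lt_zero, rfl⟩
  | succ n ih =>
    have hstep : Set.image2 (fun T u => T u) (F n)
        {u | ∃ g, (∀ j < n, g j ∈ F j) ∧ seqProd g n v = u} ⊆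
        {u | ∃ g, (∀ j < n + 1, g j ∈ F j) ∧ seqProd g (n + 1) v = u} := by
      rintro _ ⟨T, hT, _, ⟨g, hg, rfl⟩, rfl⟩
      refine ⟨update g n T, fun j hj => ?_, by rw [seqProd_update_self_succ]; rfl⟩
      rcases Nat.lt_succ_iff_lt_or_eq.mp hj with hj | rfl
      · rw [update_of_ne hj.ne]
        exact hg j hj
      · rwa [update_self]
    refine Submodule.span_mono hstep ?_
    rw [seqProd_succ, Module.End.mul_apply]
    simpa only [Submodule.map₂_span_span, LinearMap.id_apply] using
      Submodule.apply_mem_map₂ LinearMap.id (hf n) ih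

end SeqProd

namespace IsTopNilpotentSet

variable {V : Type*} [AddCommGroup V] [Module k V] {X : Set (Module.End k V)}

theorem span (hX : IsTopNilpotentSet X) :
    IsTopNilpotentSet (Submodule.span k X : Set (Module.End k V)) := by
  intro f hf W hW
  choose F hFX hfF using fun n => Submodule.mem_span_finite_of_mem_span (hf n)
  obtain ⟨N, hN⟩ := exists_forall_seqProd_apply_eq_zero_of_finite (F := fun n => (F n : Set _))
    (fun n => (F n).finite_toSet) W
    fun g hg => (hX g (fun j => hFX j (hg j)) W hW).imp fun _ => And.right
  refine ⟨N + 1, N.succ_pos, fun w hw => seqProd_apply_eq_zero_of_le N.le_succ ?_⟩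
  have hzero :
      {u | ∃ g, (∀ j < N, g j ∈ (F j : Set (Module.End k V))) ∧ seqProd g N w = u} ⊆ {0} := by
    rintro _ ⟨g, hg, rfl⟩
    exact hN g hg w hw
  simpa using Submodule.span_mono hzero (seqProd_apply_mem_span hfF w N)

theorem subsemigroupClosure (hX : IsTopNilpotentSet X) :
    IsTopNilpotentSet (Subsemigroup.closure X : Set (Module.End k V)) := by
  intro f hf W hW
  choose l hl hlX hlf using fun n => Subsemigroup.exists_list_of_mem_closure (hf n)
  -- Concatenate the reversed words: `seqProd` applies `f 0` first, i.e. the last letter of `l 0`.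
  have hl' : ∀ n, (l n).reverse ≠ [] := by simpa using hl
  obtain ⟨g, hg⟩ := List.exists_map_range_eq_flatMap_range _ hl'
  have hgX : ∀ j, g j ∈ X := by
    intro j
    have hj := List.mem_map_of_mem (f := g) (List.mem_range.mpr
      (List.le_length_flatMap_range hl' (j + 1)))
    rw [hg] at hj
    obtain ⟨i, -, hi⟩ := List.mem_flatMap.mp hj
    exact hlX i _ (List.mem_reverse.mp hi)
  obtain ⟨m, hm, hkill⟩ := hX g hgX W hW
  have hgf : seqProd g ((List.range m).flatMap fun i => (l i).reverse).length = seqProd f m := by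
    simp only [seqProd_eq_prod_reverse_map_range, hg, prod_reverse_flatMap_range_eq_seqProd,
      List.reverse_reverse, hlf]
  refine ⟨m, hm, fun w hw => ?_⟩
  rw [← hgf]
  exact seqProd_apply_eq_zero_of_le (List.le_length_flatMap_range hl' m) (hkill w hw)

end IsTopNilpotentSet

theorem stmt_7_general {V : Type*} [AddCommGroup V] [Module k V]
    (X : Set (Module.End k V)) (hX : IsTopNilpotentSet X) :
    IsTopNilpotentSet
      ((NonUnitalAlgebra.adjoin k X : NonUnitalSubalgebra k (Module.End k V)) :
        Set (Module.End k V)) := by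
  rw [← NonUnitalSubalgebra.coe_toSubmodule, NonUnitalAlgebra.adjoin_eq_span]
  exact hX.subsemigroupClosure.span

/-- if `X ⊆ End_k(V)` is topologically nilpotent, then so is the nonunital
`k`-subalgebra of `End_k(V)` generated by `X`. -/
theorem stmt_7 {V : Type*} [AddCommGroup V] [Module k V] [Nontrivial V]
    (X : Set (Module.End k V)) (hX : IsTopNilpotentSet X) :
    IsTopNilpotentSet
      ((NonUnitalAlgebra.adjoin k X : NonUnitalSubalgebra k (Module.End k V)) :
        Set (Module.End k V)) :=
  stmt_7_general X hX
end

section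
/- Let k be a field, V a nonzero k-vector space, and R a unital k-subalgebra of End_k(V) that is triangular with respect to a well-ordered basis (B, ≤) of V. Define φ: R → k^B by φ(T) = (a_v)_{v∈B}, where a_v is the coefficient of v in the expansion of T(v) in the basis B. Then φ is a k-algebra homomorphism that is continuous (for the function topology on R and the product topology on k^B with k discrete), its kernel equals TNil(R), and consequently R/TNil(R) is commutative and TNil(R) is closed in R. -/
/-!
A triangular `T` preserves every flag space `span {b j | j ≤ i}`, and on that space the `i`-th
coordinate of `T x` is `T_ii x_i`; hence reading off the diagonal is multiplicative. If the
diagonal of `T` vanishes, `T` maps `b i` into `span {b j | j < i}`, so well-founded induction puts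
every `b i` into the generalized `0`-eigenspace of `T`; conversely the diagonal of `T ^ m` is the
`m`-th power of the diagonal of `T`, and `k` has no nilpotents. Continuity is automatic because
the `i`-th diagonal entry depends only on the value `T (b i)`. The kernel, being the preimage of
a point of a discrete space, is closed, and it contains all commutators since `k ^ B` is
commutative.
-/

universe u v w

variable {k : Type u} [Field k]

/-- The function (finite/pointwise) topology on `End_k(V)`: the topology induced from the
product topology on `V → V` where `V` carries the discrete topology. -/
instance endFunctionTopology {V : Type v} [AddCommGroup V] [Module k V] :
    TopologicalSpace (Module.End k V) :=
  TopologicalSpace.induced (fun T => (T : V → V))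
    (@Pi.topologicalSpace V (fun _ => V) (fun _ => ⊥))

/-- The product topology on `Ω → k` where each factor `k` is discrete. -/
def discretePiTopology (Ω K : Type*) : TopologicalSpace (Ω → K) :=
  @Pi.topologicalSpace Ω (fun _ => K) (fun _ => ⊥)

open Submodule

theorem Module.End.maxGenEigenspace_zero_eq_top_iff {K V : Type*} [CommRing K]
    [AddCommGroup V] [Module K V] (f : Module.End K V) :
    f.maxGenEigenspace 0 = ⊤ ↔ ∀ v : V, ∃ m : ℕ, 0 < m ∧ (f ^ m) v = 0 := by
  simp only [eq_top_iff', mem_maxGenEigenspace, zero_smul, sub_zero]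
  refine forall_congr' fun v => ⟨fun ⟨m, hm⟩ => ⟨m + 1, m.succ_pos, ?_⟩,
    fun ⟨m, _, hm⟩ => ⟨m, hm⟩⟩
  rw [pow_succ', Module.End.mul_apply, hm, map_zero]

theorem Module.End.mem_maxGenEigenspace_zero_of_apply_mem {K V : Type*} [CommRing K]
    [AddCommGroup V] [Module K V] {f : Module.End K V} {x : V}
    (h : f x ∈ f.maxGenEigenspace 0) : x ∈ f.maxGenEigenspace 0 := by
  simp only [mem_maxGenEigenspace, zero_smul, sub_zero] at h ⊢
  obtain ⟨m, hm⟩ := h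
  exact ⟨m + 1, by rw [pow_succ, Module.End.mul_apply, hm]⟩

namespace Module.Basis

variable {V ι : Type*} [AddCommGroup V]

section CommRing

variable {K : Type*} [CommRing K] [Module K V]

section Preorder

variable [Preorder ι] (b : Basis ι K V)

theorem repr_eq_zero_of_mem_span_le {x : V} {i j : ι}
    (hx : x ∈ span K (b '' {l | l ≤ i})) (hji : ¬ j ≤ i) : b.repr x j = 0 :=
  Finsupp.notMem_support_iff.mp fun hj => hji (b.mem_span_image.mp hx hj)

theorem apply_mem_span_le {T : Module.End K V}
    (hT : ∀ i, T (b i) ∈ span K (b '' {j | j ≤ i})) {i : ι} {x : V}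
    (hx : x ∈ span K (b '' {j | j ≤ i})) : T x ∈ span K (b '' {j | j ≤ i}) := by
  refine (span_le (p := (span K (b '' {j | j ≤ i})).comap T)).mpr ?_ hx
  rintro _ ⟨j, hji : j ≤ i, rfl⟩
  exact span_mono (Set.image_mono fun l (hlj : l ≤ j) => hlj.trans hji) (hT j)

def triangularSubalgebra : Subalgebra K (Module.End K V) where
  carrier := {T | ∀ i, T (b i) ∈ span K (b '' {j | j ≤ i})}
  mul_mem' hT hS i := b.apply_mem_span_le hT (hS i)
  add_mem' hT hS i := add_mem (hT i) (hS i)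
  algebraMap_mem' c i := by
    rw [Module.algebraMap_end_apply]
    exact smul_mem _ c (subset_span ⟨i, le_rfl, rfl⟩)

end Preorder

section PartialOrder

variable [PartialOrder ι] (b : Basis ι K V)

theorem repr_apply_of_mem_span_le {T : Module.End K V} (hT : T ∈ b.triangularSubalgebra)
    {i : ι} {x : V} (hx : x ∈ span K (b '' {j | j ≤ i})) :
    b.repr (T x) i = b.repr (T (b i)) i * b.repr x i := by
  induction hx using span_induction with
  | mem y hy =>
    obtain ⟨j, hji : j ≤ i, rfl⟩ := hy
    obtain rfl | hlt := hji.eq_or_lt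
    · simp
    · rw [b.repr_eq_zero_of_mem_span_le (hT j) hlt.not_ge, repr_self,
        Finsupp.single_eq_of_ne hlt.ne', mul_zero]
  | zero => simp
  | add y z _ _ hy hz => simp [mul_add, hy, hz]
  | smul c y _ hy => simp only [map_smul, Finsupp.smul_apply, hy, smul_eq_mul]; ring

noncomputable def diagHom : b.triangularSubalgebra →ₐ[K] (ι → K) where
  toFun T i := b.repr ((T : Module.End K V) (b i)) i
  map_one' := by ext; simp
  map_mul' T S := by
    ext i
    exact b.repr_apply_of_mem_span_le T.2 (S.2 i)
  map_zero' := by ext; simp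
  map_add' T S := by ext; simp
  commutes' c := by ext; simp [Algebra.algebraMap_eq_smul_one]

theorem diagHom_apply (T : b.triangularSubalgebra) (i : ι) :
    b.diagHom T i = b.repr ((T : Module.End K V) (b i)) i :=
  rfl

theorem mem_span_lt_of_repr_eq_zero {x : V} {i : ι} (hx : x ∈ span K (b '' {l | l ≤ i}))
    (h : b.repr x i = 0) : x ∈ span K (b '' {l | l < i}) := by
  rw [mem_span_image] at hx ⊢
  intro j hj
  refine (hx hj).lt_of_ne ?_
  rintro rfl
  exact Finsupp.mem_support_iff.mp hj h

theorem maxGenEigenspace_zero_eq_top_of_diagHom_eq_zero [WellFoundedLT ι]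
    {T : b.triangularSubalgebra} (hT : b.diagHom T = 0) :
    (T : Module.End K V).maxGenEigenspace 0 = ⊤ := by
  have hbasis (i : ι) : b i ∈ (T : Module.End K V).maxGenEigenspace 0 := by
    induction i using WellFoundedLT.induction with
    | _ i ih =>
      apply Module.End.mem_maxGenEigenspace_zero_of_apply_mem
      refine span_le.mpr ?_ (b.mem_span_lt_of_repr_eq_zero (T.2 i) (congrFun hT i))
      rintro _ ⟨j, hji, rfl⟩
      exact ih j hji
  rw [eq_top_iff, ← b.span_eq, span_le]
  rintro _ ⟨i, rfl⟩
  exact hbasis i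

theorem diagHom_eq_zero_of_maxGenEigenspace_zero_eq_top [IsReduced K]
    {T : b.triangularSubalgebra} (hT : (T : Module.End K V).maxGenEigenspace 0 = ⊤) :
    b.diagHom T = 0 := by
  ext i
  obtain ⟨m, hm⟩ := (Module.End.mem_maxGenEigenspace _ _ _).mp (hT ▸ mem_top : b i ∈ _)
  rw [zero_smul, sub_zero] at hm
  have hpow : b.diagHom T i ^ m = 0 := by
    rw [← Pi.pow_apply, ← map_pow, diagHom_apply, Subalgebra.coe_pow, hm, map_zero,
      Finsupp.coe_zero, Pi.zero_apply]
  exact IsNilpotent.eq_zero ⟨m, hpow⟩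

theorem diagHom_eq_zero_iff [WellFoundedLT ι] [IsReduced K] {T : b.triangularSubalgebra} :
    b.diagHom T = 0 ↔ (T : Module.End K V).maxGenEigenspace 0 = ⊤ :=
  ⟨b.maxGenEigenspace_zero_eq_top_of_diagHom_eq_zero,
    b.diagHom_eq_zero_of_maxGenEigenspace_zero_eq_top⟩

end PartialOrder

end CommRing

theorem continuous_diag [TopologicalSpace k] [DiscreteTopology k] [Module k V]
    (b : Basis ι k V) :
    Continuous fun (T : Module.End k V) i => b.repr (T (b i)) i := by
  let _ : TopologicalSpace V := ⊥
  have : DiscreteTopology V := ⟨rfl⟩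
  exact continuous_pi fun i => (continuous_of_discreteTopology (f := fun v => b.repr v i)).comp
    ((continuous_apply (b i)).comp continuous_induced_dom)

end Module.Basis

theorem stmt_15_general {V : Type v} [AddCommGroup V] [Module k V]
    (R : Subalgebra k (Module.End k V))
    {ι : Type w} [LinearOrder ι] [WellFoundedLT ι] (b : Module.Basis ι k V)
    (htri : ∀ T ∈ R, ∀ i : ι, T (b i) ∈ Submodule.span k (⇑b '' {j | j ≤ i})) :
    ∃ Φ : R →ₐ[k] (ι → k),
      (∀ (T : R) (i : ι), Φ T i = b.repr ((T : Module.End k V) (b i)) i) ∧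
      (@Continuous ↥R (ι → k) inferInstance (discretePiTopology ι k) ⇑Φ) ∧
      (∀ T : R, Φ T = 0 ↔
        ∀ v : V, ∃ m : ℕ, 0 < m ∧ ((T : Module.End k V) ^ m) v = 0) ∧
      (∀ T S : R,
        ∀ v : V, ∃ m : ℕ, 0 < m ∧ (((T * S - S * T : R) : Module.End k V) ^ m) v = 0) ∧
      IsClosed {T : R | ∀ v : V, ∃ m : ℕ, 0 < m ∧ ((T : Module.End k V) ^ m) v = 0} := by
  let _ : TopologicalSpace k := ⊥
  have : DiscreteTopology k := ⟨rfl⟩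
  let Φ := b.diagHom.comp (Subalgebra.inclusion (show R ≤ b.triangularSubalgebra from htri))
  have hker (T : R) :
      Φ T = 0 ↔ ∀ v : V, ∃ m : ℕ, 0 < m ∧ ((T : Module.End k V) ^ m) v = 0 :=
    b.diagHom_eq_zero_iff.trans (Module.End.maxGenEigenspace_zero_eq_top_iff _)
  have hcont : @Continuous R (ι → k) inferInstance (discretePiTopology ι k) Φ :=
    b.continuous_diag.comp continuous_subtype_val
  refine ⟨Φ, fun _ _ => rfl, hcont, hker, fun T S => (hker _).mp ?_, ?_⟩
  · rw [map_sub, map_mul, map_mul, mul_comm, sub_self]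
  · rw [show {T : R | _} = Φ ⁻¹' {0} from Set.ext fun T => (hker T).symm]
    exact (isClosed_singleton : IsClosed ({0} : Set (ι → k))).preimage hcont

/-- if `R` is a unital `k`-subalgebra of `End_k(V)` triangular with respect
to a well-ordered basis `(B, ≤)`, then the map `φ : R → k^B` reading off the diagonal
coefficients is a continuous `k`-algebra homomorphism whose kernel is `TNil(R)`;
consequently `R/TNil(R)` is commutative (commutators lie in `TNil(R)`) and `TNil(R)` is
closed in `R`. -/
theorem stmt_15 {V : Type v} [AddCommGroup V] [Module k V] [Nontrivial V]
    (R : Subalgebra k (Module.End k V))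
    {ι : Type w} [LinearOrder ι] [WellFoundedLT ι] (b : Module.Basis ι k V)
    (htri : ∀ T ∈ R, ∀ i : ι, T (b i) ∈ Submodule.span k (⇑b '' {j | j ≤ i})) :
    ∃ Φ : R →ₐ[k] (ι → k),
      (∀ (T : R) (i : ι), Φ T i = b.repr ((T : Module.End k V) (b i)) i) ∧
      (@Continuous ↥R (ι → k) inferInstance (discretePiTopology ι k) ⇑Φ) ∧
      (∀ T : R, Φ T = 0 ↔
        ∀ v : V, ∃ m : ℕ, 0 < m ∧ ((T : Module.End k V) ^ m) v = 0) ∧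
      (∀ T S : R,
        ∀ v : V, ∃ m : ℕ, 0 < m ∧ (((T * S - S * T : R) : Module.End k V) ^ m) v = 0) ∧
      IsClosed {T : R | ∀ v : V, ∃ m : ℕ, 0 < m ∧ ((T : Module.End k V) ^ m) v = 0} :=
  stmt_15_general R b htri
end
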